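/- For every μ ∈ (0,1), the PCR3BP has at least three collinear equilibrium points on the y₁-axis: there exist x₁ ∈ (0,1), x₂ ∈ (1,∞) and x₃ ∈ (−∞,0) such that each constant curve y(t) ≡ (xᵢ, 0) solves the equations of motion; equivalently, the function g(x) = x − μ − (1−μ)·x/|x|³ − μ·(x−1)/|x−1|³ has a zero in each of the intervals (0,1), (1,∞) and (−∞,0). -/

import Mathlib

noncomputable section

/-- Distance from `y` to the primary `P₁ = (0,0)`. -/
def r1 (y : ℝ × ℝ) : ℝ := Real.sqrt (y.1 ^ 2 + y.2 ^ 2)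

/-- Distance from `y` to the secondary `P₂ = (1,0)`. -/
def r2 (y : ℝ × ℝ) : ℝ := Real.sqrt ((y.1 - 1) ^ 2 + y.2 ^ 2)

/-- Effective potential of the PCR3BP in rotating coordinates. -/
def Omega (μ : ℝ) (y : ℝ × ℝ) : ℝ :=
  (1 / 2) * ((y.1 - μ) ^ 2 + y.2 ^ 2) + (1 - μ) / r1 y + μ / r2 y + (1 / 2) * μ * (1 - μ)

/-- Jacobi integral `J(y, v) = 2Ω(y) − |v|²`. -/
def Jacobi (μ : ℝ) (y v : ℝ × ℝ) : ℝ := 2 * Omega μ y - (v.1 ^ 2 + v.2 ^ 2)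

/-- Partial derivative `∂Ω/∂y₁`. -/
def OmegaY1 (μ : ℝ) (y : ℝ × ℝ) : ℝ := deriv (fun x => Omega μ (x, y.2)) y.1

/-- Partial derivative `∂Ω/∂y₂`. -/
def OmegaY2 (μ : ℝ) (y : ℝ × ℝ) : ℝ := deriv (fun x => Omega μ (y.1, x)) y.2

/-- The curve `t ↦ (y₁ t, y₂ t)` solves the PCR3BP equations of motion
`ÿ₁ − 2ẏ₂ = ∂Ω/∂y₁`, `ÿ₂ + 2ẏ₁ = ∂Ω/∂y₂` at every time of `I`. -/
def IsSolutionOn (μ : ℝ) (I : Set ℝ) (y₁ y₂ : ℝ → ℝ) : Prop :=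
  ∀ t ∈ I,
    deriv (deriv y₁) t - 2 * deriv y₂ t = OmegaY1 μ (y₁ t, y₂ t) ∧
    deriv (deriv y₂) t + 2 * deriv y₁ t = OmegaY2 μ (y₁ t, y₂ t)

/-- `f` is twice differentiable at every point of `I`. -/
def TwiceDiffOn (I : Set ℝ) (f : ℝ → ℝ) : Prop :=
  ∀ t ∈ I, DifferentiableAt ℝ f t ∧ DifferentiableAt ℝ (deriv f) t

/-- The restriction of `∂Ω/∂y₁` to the `y₁`-axis. -/
def gAxis (μ x : ℝ) : ℝ :=
  x - μ - (1 - μ) * x / |x| ^ 3 - μ * (x - 1) / |x - 1| ^ 3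

/-! Along the axis, `Ω(x, 0) = ½(x - μ)² + (1 - μ)/|x| + μ/|x - 1| + const` has derivative `g`,
and `Ω` is even in `y₂`, so the constant curve at a zero of `g` off the primaries solves the
equations of motion. On each of the three intervals cut out by the primaries `g` is continuous
and changes sign: at distance `m/3` from a primary of mass `m` its attraction `m/d²` is at least
`9` and outweighs every other term, while at `x = ±2` the linear term `x - μ` wins. The
intermediate value theorem then gives a zero in each interval. -/

open Set

theorem deriv_zero_of_even {F : Type*} [NormedAddCommGroup F] [NormedSpace ℝ F] {f : ℝ → F}
    (hf : ∀ s, f (-s) = f s) : deriv f 0 = 0 := by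
  have h := deriv_comp_neg f (0 : ℝ)
  simp only [hf, neg_zero] at h
  have h2 : (2 : ℝ) • deriv f 0 = 0 := by
    rw [two_smul]; nth_rewrite 1 [h]; exact neg_add_cancel _
  simpa using h2

theorem hasDerivAt_abs_sub {a x : ℝ} (h : x ≠ a) :
    HasDerivAt (fun t => |t - a|) ((x - a) / |x - a|) x := by
  have hxa : x - a ≠ 0 := sub_ne_zero.2 h
  refine ((hasDerivAt_abs hxa).comp x ((hasDerivAt_id x).sub_const a)).congr_deriv ?_
  rw [mul_one, eq_div_iff (abs_ne_zero.2 hxa), sign_mul_abs]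

theorem hasDerivAt_const_div_abs_sub (c : ℝ) {a x : ℝ} (h : x ≠ a) :
    HasDerivAt (fun t => c / |t - a|) (-(c * (x - a) / |x - a| ^ 3)) x := by
  have hxa : |x - a| ≠ 0 := abs_ne_zero.2 (sub_ne_zero.2 h)
  refine ((hasDerivAt_const x c).div (hasDerivAt_abs_sub h) hxa).congr_deriv ?_
  field_simp
  ring

theorem Omega_mk_zero (μ t : ℝ) :
    Omega μ (t, 0) =
      (1 / 2) * (t - μ) ^ 2 + (1 - μ) / |t| + μ / |t - 1| + (1 / 2) * μ * (1 - μ) := by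
  simp [Omega, r1, r2, Real.sqrt_sq_eq_abs]

theorem Omega_mk_neg (μ x s : ℝ) : Omega μ (x, -s) = Omega μ (x, s) := by
  simp [Omega, r1, r2]

theorem hasDerivAt_Omega_mk_zero {μ x : ℝ} (h0 : x ≠ 0) (h1 : x ≠ 1) :
    HasDerivAt (fun t => Omega μ (t, 0)) (gAxis μ x) x := by
  simp only [Omega_mk_zero]
  have hquad : HasDerivAt (fun t : ℝ => (1 / 2) * (t - μ) ^ 2) (x - μ) x := by
    refine ((((hasDerivAt_id x).sub_const μ).pow 2).const_mul (1 / 2 : ℝ)).congr_deriv ?_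
    simp only [id_eq, Nat.cast_ofNat]; ring
  have h := ((hquad.add (hasDerivAt_const_div_abs_sub (1 - μ) (a := 0) h0)).add
    (hasDerivAt_const_div_abs_sub μ h1)).add_const ((1 / 2) * μ * (1 - μ))
  simp only [sub_zero] at h
  refine h.congr_deriv ?_
  simp only [gAxis]; ring

-- Evenness alone suffices: no differentiability is needed for `deriv` to vanish.
theorem OmegaY2_mk_zero (μ x : ℝ) : OmegaY2 μ (x, 0) = 0 :=
  deriv_zero_of_even (Omega_mk_neg μ x)

theorem isSolutionOn_const_of_gAxis_eq_zero {μ x : ℝ} (I : Set ℝ) (h0 : x ≠ 0) (h1 : x ≠ 1)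
    (hg : gAxis μ x = 0) : IsSolutionOn μ I (fun _ => x) (fun _ => 0) := by
  intro t _
  simp only [deriv_const', OmegaY1, OmegaY2_mk_zero, (hasDerivAt_Omega_mk_zero h0 h1).deriv, hg]
  norm_num

theorem continuousOn_gAxis (μ : ℝ) : ContinuousOn (gAxis μ) {0, 1}ᶜ := by
  intro x hx
  simp only [mem_compl_iff, mem_insert_iff, mem_singleton_iff, not_or] at hx
  have h0 : |x| ^ 3 ≠ 0 := pow_ne_zero _ (abs_ne_zero.2 hx.1)
  have h1 : |x - 1| ^ 3 ≠ 0 := pow_ne_zero _ (abs_ne_zero.2 (sub_ne_zero.2 hx.2))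
  unfold gAxis
  fun_prop (disch := assumption)

theorem gAxis_of_mem_Ioo {μ x : ℝ} (hx : x ∈ Ioo 0 1) :
    gAxis μ x = x - μ - (1 - μ) / x ^ 2 + μ / (1 - x) ^ 2 := by
  obtain ⟨h0, h1⟩ := hx
  have h1' : 0 < 1 - x := sub_pos.2 h1
  rw [gAxis, abs_of_pos h0, abs_of_neg (sub_neg.2 h1), neg_sub]
  field_simp
  ring

theorem gAxis_of_one_lt {μ x : ℝ} (hx : 1 < x) :
    gAxis μ x = x - μ - (1 - μ) / x ^ 2 - μ / (x - 1) ^ 2 := by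
  have h0 : 0 < x := by linarith
  have h1 : 0 < x - 1 := sub_pos.2 hx
  rw [gAxis, abs_of_pos h0, abs_of_pos h1]
  field_simp

theorem gAxis_of_neg {μ x : ℝ} (hx : x < 0) :
    gAxis μ x = x - μ + (1 - μ) / x ^ 2 + μ / (1 - x) ^ 2 := by
  have h1 : 0 < 1 - x := by linarith
  rw [gAxis, abs_of_neg hx, abs_of_neg (by linarith : x - 1 < 0), neg_sub]
  field_simp
  ring

theorem sq_le_div_div_sq {c : ℝ} (k : ℝ) (hc0 : 0 < c) (hc1 : c ≤ 1) :
    k ^ 2 ≤ c / (c / k) ^ 2 := by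
  rw [div_pow, div_div_eq_mul_div, pow_two c, mul_div_mul_left _ _ hc0.ne']
  exact le_div_self (sq_nonneg k) hc0 hc1

theorem exists_gAxis_eq_zero_of_Icc {μ a b : ℝ} (hab : a ≤ b) (hs : Icc a b ⊆ {0, 1}ᶜ)
    (ha : gAxis μ a ≤ 0) (hb : 0 ≤ gAxis μ b) : ∃ x ∈ Icc a b, gAxis μ x = 0 :=
  intermediate_value_Icc hab ((continuousOn_gAxis μ).mono hs) ⟨ha, hb⟩

theorem exists_gAxis_eq_zero_mem_Ioo {μ : ℝ} (hμ : μ ∈ Ioo 0 1) :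
    ∃ x ∈ Ioo 0 1, gAxis μ x = 0 := by
  obtain ⟨h0, h1⟩ := hμ
  have hga : gAxis μ ((1 - μ) / 3) ≤ 0 := by
    have hP : 3 ^ 2 ≤ (1 - μ) / ((1 - μ) / 3) ^ 2 := sq_le_div_div_sq 3 (by linarith) (by linarith)
    have hS : μ / (1 - (1 - μ) / 3) ^ 2 ≤ 9 / 4 := by
      rw [div_le_iff₀ (by nlinarith)]; nlinarith
    rw [gAxis_of_mem_Ioo ⟨by linarith, by linarith⟩]; linarith
  have hgb : 0 ≤ gAxis μ (1 - μ / 3) := by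
    have hS : 3 ^ 2 ≤ μ / (1 - (1 - μ / 3)) ^ 2 := by
      rw [sub_sub_cancel]; exact sq_le_div_div_sq 3 h0 h1.le
    have hP : (1 - μ) / (1 - μ / 3) ^ 2 ≤ 9 / 4 := by
      rw [div_le_iff₀ (by nlinarith)]; nlinarith
    rw [gAxis_of_mem_Ioo ⟨by linarith, by linarith⟩]; linarith
  obtain ⟨x, hx, hgx⟩ := exists_gAxis_eq_zero_of_Icc (by linarith)
    (fun _ _ => by grind) hga hgb
  exact ⟨x, ⟨by linarith [hx.1], by linarith [hx.2]⟩, hgx⟩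

theorem exists_gAxis_eq_zero_mem_Ioi {μ : ℝ} (hμ : μ ∈ Ioo 0 1) :
    ∃ x ∈ Ioi 1, gAxis μ x = 0 := by
  obtain ⟨h0, h1⟩ := hμ
  have hga : gAxis μ (1 + μ / 3) ≤ 0 := by
    have hS : 3 ^ 2 ≤ μ / (1 + μ / 3 - 1) ^ 2 := by
      rw [add_sub_cancel_left]; exact sq_le_div_div_sq 3 h0 h1.le
    have hP : 0 ≤ (1 - μ) / (1 + μ / 3) ^ 2 := div_nonneg (by linarith) (sq_nonneg _)
    rw [gAxis_of_one_lt (by linarith)]; linarith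
  have hgb : 0 ≤ gAxis μ 2 := by
    rw [gAxis_of_one_lt one_lt_two]; linarith
  obtain ⟨x, hx, hgx⟩ := exists_gAxis_eq_zero_of_Icc (by linarith)
    (fun _ _ => by grind) hga hgb
  exact ⟨x, mem_Ioi.2 (by linarith [hx.1]), hgx⟩

theorem exists_gAxis_eq_zero_mem_Iio {μ : ℝ} (hμ : μ ∈ Ioo 0 1) :
    ∃ x ∈ Iio 0, gAxis μ x = 0 := by
  obtain ⟨h0, h1⟩ := hμ
  have hga : gAxis μ (-2) ≤ 0 := by
    rw [gAxis_of_neg (by norm_num)]; linarith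
  have hgb : 0 ≤ gAxis μ (-((1 - μ) / 3)) := by
    have hP : 3 ^ 2 ≤ (1 - μ) / (-((1 - μ) / 3)) ^ 2 := by
      rw [neg_sq]; exact sq_le_div_div_sq 3 (by linarith) (by linarith)
    have hS : 0 ≤ μ / (1 - -((1 - μ) / 3)) ^ 2 := div_nonneg h0.le (sq_nonneg _)
    rw [gAxis_of_neg (by linarith)]; linarith
  obtain ⟨x, hx, hgx⟩ := exists_gAxis_eq_zero_of_Icc (by linarith)
    (fun _ _ => by grind) hga hgb
  exact ⟨x, mem_Iio.2 (by linarith [hx.2]), hgx⟩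

/-- for every `μ ∈ (0,1)` there are at least three collinear equilibrium
points, one in each of `(0,1)`, `(1,∞)`, `(−∞,0)`: the corresponding constant curves
solve the equations of motion, and each point is a zero of `g`. -/
theorem collinear_equilibria_exist (μ : ℝ) (hμ : μ ∈ Set.Ioo (0 : ℝ) 1) :
    (∃ x ∈ Set.Ioo (0 : ℝ) 1,
      IsSolutionOn μ Set.univ (fun _ => x) (fun _ => 0) ∧ gAxis μ x = 0) ∧
    (∃ x ∈ Set.Ioi (1 : ℝ),
      IsSolutionOn μ Set.univ (fun _ => x) (fun _ => 0) ∧ gAxis μ x = 0) ∧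
    (∃ x ∈ Set.Iio (0 : ℝ),
      IsSolutionOn μ Set.univ (fun _ => x) (fun _ => 0) ∧ gAxis μ x = 0) := by
  obtain ⟨x₁, ⟨h₁0, h₁1⟩, hg₁⟩ := exists_gAxis_eq_zero_mem_Ioo hμ
  obtain ⟨x₂, h₂ : 1 < x₂, hg₂⟩ := exists_gAxis_eq_zero_mem_Ioi hμ
  obtain ⟨x₃, h₃ : x₃ < 0, hg₃⟩ := exists_gAxis_eq_zero_mem_Iio hμ
  refine ⟨⟨x₁, ⟨h₁0, h₁1⟩, ?_, hg₁⟩, ⟨x₂, h₂, ?_, hg₂⟩, ⟨x₃, h₃, ?_, hg₃⟩⟩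
  · exact isSolutionOn_const_of_gAxis_eq_zero _ h₁0.ne' h₁1.ne hg₁
  · exact isSolutionOn_const_of_gAxis_eq_zero _ (by linarith) h₂.ne' hg₂
  · exact isSolutionOn_const_of_gAxis_eq_zero _ h₃.ne (by linarith) hg₃
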